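/- For $n = 2$ (so $m = 1$, $\Delta_2 = 2t^2 - 5t + 2 = (2t-1)(t-2)$), the group $U(\Lambda_2)/\{t^j\}_{j\in\mathbb{Z}}$ of unitary units of $\Lambda_2 = \mathbb{Z}[t,t^{-1}]/(\Delta_2)$ modulo powers of $t$ is isomorphic to $\mathbb{Z}/2\mathbb{Z}$. Concretely: $U(\Lambda_2) \cong \mathbb{Z}[1/2]^\times = \{\pm 2^j\}$ via $t \mapsto 1/2$, since every unit $x = \pm 2^j$ of $\mathbb{Z}[1/2]$ satisfies $x - x^{-1} \in 3\cdot\mathbb{Z}[1/2]$, and the image of $t$ generates the index-two subgroup $\{2^j\}$. -/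

import Mathlib

open LaurentPolynomial in
/-- `Δₙ = n t² - (2n+1) t + n` as a Laurent polynomial over `ℤ`. -/
noncomputable def DeltaL (n : ℤ) : LaurentPolynomial ℤ :=
  LaurentPolynomial.C n * T 2 - LaurentPolynomial.C (2 * n + 1) * T 1 + LaurentPolynomial.C n

/-- `Λ₂ = ℤ[t,t⁻¹]/(2t² - 5t + 2)`. -/
abbrev Lam2 := LaurentPolynomial ℤ ⧸ Ideal.span {DeltaL 2}

/-- The quotient map `ℤ[t,t⁻¹] → Λ₂`. -/
noncomputable abbrev Qmk2 : LaurentPolynomial ℤ →+* Lam2 :=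
  Ideal.Quotient.mk (Ideal.span {DeltaL 2})

/-!
Evaluating at the two roots `1/2` and `2` of `Δ₂ = (2t - 1)(t - 2)` embeds `Λ₂` into
`ℤ[1/2] × ℤ[1/2]`: an integer polynomial vanishing at both roots is divisible by the primitive
polynomial `Δ₂`, by Gauss's lemma. The involution `t ↦ t⁻¹` swaps the two coordinates, so `x` is
unitary exactly when its coordinates are mutually inverse, and then `x` is determined by its first
coordinate. The units of `ℤ[1/2]` are `±2ʲ`, the images of `±t⁻ʲ`; they satisfy
`x - x⁻¹ ∈ 3ℤ[1/2]` because `u - u⁻¹` divides `uʲ - u⁻ʲ` and `2 - 1/2 = 3 · 1/2`. Finally `-1` is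
no power of `t`, as powers of `2` are positive in `ℚ`.
-/

open Polynomial
open scoped LaurentPolynomial
open LaurentPolynomial (T)

namespace LaurentPolynomial

theorem ringHom_ext_int {S : Type*} [Semiring S] {f g : ℤ[T;T⁻¹] →+* S}
    (h : f (T 1) = g (T 1)) : f = g :=
  IsLocalization.ringHom_ext (Submonoid.powers (X : ℤ[X])) <|
    Polynomial.ringHom_ext
      (fun a => RingHom.congr_fun (RingHom.ext_int ((f.comp (algebraMap _ _)).comp Polynomial.C)
        ((g.comp (algebraMap _ _)).comp Polynomial.C)) a)
      (by simpa [← Polynomial.toLaurent_X] using h)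

end LaurentPolynomial

theorem Localization.Away.exists_eq_zpow_or_eq_neg_zpow {p : ℤ} (hp : Prime p)
    (w : (Localization.Away p)ˣ) :
    ∃ j : ℤ, w = (IsLocalization.Away.algebraMap_isUnit p).unit ^ j ∨
      w = -(IsLocalization.Away.algebraMap_isUnit p).unit ^ j := by
  set u := (IsLocalization.Away.algebraMap_isUnit (S := Localization.Away p) p).unit
  obtain ⟨n, a, hwa⟩ := IsLocalization.Away.surj p (w : Localization.Away p)
  have ha : IsUnit (algebraMap ℤ (Localization.Away p) a) :=
    hwa ▸ w.isUnit.mul ((IsLocalization.Away.algebraMap_isUnit p).pow n)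
  obtain ⟨m, ham⟩ := (IsLocalization.Away.algebraMap_isUnit_iff p).mp ha
  obtain ⟨i, -, hai⟩ := (dvd_prime_pow hp m).mp ham
  have key : w * u ^ n = u ^ i ∨ w * u ^ n = -u ^ i := by
    rcases Int.associated_iff.mp hai with rfl | rfl
    · exact .inl (Units.ext (by simpa [u] using hwa))
    · exact .inr (Units.ext (by simpa [u] using hwa))
  refine ⟨i - n, ?_⟩
  rw [zpow_sub, zpow_natCast, zpow_natCast]
  rcases key with key | key
  · exact .inl (eq_mul_inv_of_mul_eq key)
  · exact .inr (by rw [eq_mul_inv_of_mul_eq key]; exact Units.ext (by simp))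

theorem sub_inv_dvd_zpow_sub_inv {S : Type*} [CommRing S] (u : Sˣ) (j : ℤ) :
    (u - u⁻¹ : S) ∣ ↑(u ^ j) - ↑(u ^ j)⁻¹ := by
  have hnat (n : ℕ) : (u - u⁻¹ : S) ∣ ↑(u ^ n) - ↑(u ^ n)⁻¹ := by
    simpa [Units.val_pow_eq_pow_val] using sub_dvd_pow_sub_pow (u : S) ↑u⁻¹ n
  obtain ⟨n, rfl | rfl⟩ := j.eq_nat_or_neg
  · exact_mod_cast hnat n
  · rw [zpow_neg, inv_inv, zpow_natCast, ← dvd_neg, neg_sub]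
    exact hnat n

theorem sub_inv_dvd_sub_inv_of_eq_zpow {S : Type*} [CommRing S] (u : Sˣ) {w : Sˣ} {j : ℤ}
    (hw : w = u ^ j ∨ w = -u ^ j) : (u - u⁻¹ : S) ∣ w - ↑w⁻¹ := by
  rcases hw with rfl | rfl
  · exact sub_inv_dvd_zpow_sub_inv u j
  · simpa [← neg_sub', sub_eq_add_neg, add_comm] using (sub_inv_dvd_zpow_sub_inv u j).neg_right

noncomputable def deltaPoly : ℤ[X] := 2 * X ^ 2 - 5 * X + 2

theorem toLaurent_deltaPoly : toLaurent deltaPoly = DeltaL 2 := by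
  simp [deltaPoly, DeltaL, map_ofNat]

theorem isPrimitive_deltaPoly : deltaPoly.IsPrimitive := by
  intro r hr
  rw [C_dvd_iff_dvd_coeff] at hr
  have h0 : r ∣ 2 := by simpa [deltaPoly] using hr 0
  have h1 : r ∣ 5 := by simpa [deltaPoly, coeff_X, coeff_one] using hr 1
  exact isUnit_of_dvd_one (by simpa using dvd_sub h1 (dvd_mul_of_dvd_right h0 2))

theorem deltaPoly_dvd_of_isRoot {p : ℤ[X]} (h2 : (p.map (Int.castRingHom ℚ)).IsRoot 2)
    (hhalf : (p.map (Int.castRingHom ℚ)).IsRoot 2⁻¹) : deltaPoly ∣ p := by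
  rw [isPrimitive_deltaPoly.dvd_iff_fraction_map_dvd_fraction_map ℚ]
  have hfactor : deltaPoly.map (algebraMap ℤ ℚ) =
      C 2 * ((X - C 2) * (X - C 2⁻¹)) := by
    simp only [deltaPoly, Polynomial.map_add, Polynomial.map_sub, Polynomial.map_mul,
      Polynomial.map_pow, Polynomial.map_ofNat, map_X]
    have h : (2 : ℚ[X]) * C 2⁻¹ = 1 := by rw [← map_ofNat C 2, ← C_mul]; norm_num
    rw [map_ofNat C 2]
    linear_combination (X - 2) * h
  rw [hfactor, C_mul_dvd two_ne_zero]
  exact (isCoprime_X_sub_C_of_isUnit_sub (by norm_num)).mul_dvd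
    (dvd_iff_isRoot.mpr h2) (dvd_iff_isRoot.mpr hhalf)

theorem eval₂_DeltaL {S : Type*} [CommRing S] (u : Sˣ) (n : ℤ) :
    LaurentPolynomial.eval₂ (Int.castRingHom S) u (DeltaL n) =
      n * u ^ 2 - (2 * n + 1) * u + n := by
  simp [DeltaL, map_ofNat]

namespace Lam2

variable {S : Type*} [CommRing S]

noncomputable def lift (u : Sˣ) (hu : 2 * (u : S) ^ 2 - 5 * u + 2 = 0) : Lam2 →+* S :=
  Ideal.Quotient.lift _ (LaurentPolynomial.eval₂ (Int.castRingHom S) u) fun f hf => by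
    obtain ⟨g, rfl⟩ := Ideal.mem_span_singleton'.mp hf
    rw [map_mul, eval₂_DeltaL]
    linear_combination (LaurentPolynomial.eval₂ (Int.castRingHom S) u g) * hu

theorem lift_mk (u : Sˣ) (hu : 2 * (u : S) ^ 2 - 5 * u + 2 = 0) (f : ℤ[T;T⁻¹]) :
    lift u hu (Qmk2 f) = LaurentPolynomial.eval₂ (Int.castRingHom S) u f := rfl

theorem ringHom_ext {f g : Lam2 →+* S} (h : f (Qmk2 (T 1)) = g (Qmk2 (T 1))) : f = g :=
  Ideal.Quotient.ringHom_ext (LaurentPolynomial.ringHom_ext_int h)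

end Lam2

local notation "ℤ½" => Localization.Away (2 : ℤ)

noncomputable def twoUnit : ℤ½ˣ := (IsLocalization.Away.algebraMap_isUnit (2 : ℤ)).unit

theorem twoUnit_val : (twoUnit : ℤ½) = 2 := by
  simp [twoUnit]

theorem two_mul_twoUnit_inv : 2 * ((twoUnit⁻¹ : ℤ½ˣ) : ℤ½) = 1 := by
  rw [← twoUnit_val, Units.mul_inv]

theorem three_dvd_sub_inv (w : ℤ½ˣ) : (3 : ℤ½) ∣ w - ↑w⁻¹ := by
  obtain ⟨j, hj⟩ := Localization.Away.exists_eq_zpow_or_eq_neg_zpow Int.prime_two w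
  refine dvd_trans ⟨↑twoUnit⁻¹, ?_⟩ (sub_inv_dvd_sub_inv_of_eq_zpow twoUnit hj)
  rw [twoUnit_val]
  linear_combination (-2 : ℤ½) * two_mul_twoUnit_inv

noncomputable def toRat : ℤ½ →+* ℚ :=
  IsLocalization.Away.lift (2 : ℤ) (g := Int.castRingHom ℚ) (by norm_num)

theorem toRat_twoUnit_zpow (j : ℤ) : toRat ↑(twoUnit ^ j) = 2 ^ j := by
  change ((Units.map (toRat : ℤ½ →* ℚ) (twoUnit ^ j) : ℚˣ) : ℚ) = _
  rw [map_zpow, Units.val_zpow_eq_zpow_val, Units.coe_map, MonoidHom.coe_coe, twoUnit,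
    IsUnit.unit_spec, toRat, IsLocalization.Away.lift_eq]
  rfl

theorem toRat_twoUnit : toRat twoUnit = 2 := by
  simpa using toRat_twoUnit_zpow 1

theorem toRat_twoUnit_inv : toRat ↑twoUnit⁻¹ = 2⁻¹ := by
  simpa using toRat_twoUnit_zpow (-1)

namespace Lam2

noncomputable def evalHalf : Lam2 →+* ℤ½ :=
  lift twoUnit⁻¹ (by linear_combination (↑twoUnit⁻¹ - 2 : ℤ½) * two_mul_twoUnit_inv)

noncomputable def evalTwo : Lam2 →+* ℤ½ :=
  lift twoUnit (by rw [twoUnit_val]; norm_num)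

theorem evalHalf_mk_T (j : ℤ) : evalHalf (Qmk2 (T j)) = ↑(twoUnit ^ (-j)) := by
  simp [evalHalf, lift_mk]

theorem evalTwo_mk_T (j : ℤ) : evalTwo (Qmk2 (T j)) = ↑(twoUnit ^ j) := by
  simp [evalTwo, lift_mk]

theorem eq_zero_of_evalHalf_eq_zero_of_evalTwo_eq_zero {x : Lam2} (hhalf : evalHalf x = 0)
    (htwo : evalTwo x = 0) : x = 0 := by
  obtain ⟨f, rfl⟩ := Ideal.Quotient.mk_surjective x
  obtain ⟨n, p, hp⟩ := f.exists_T_pow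
  have hroot (u : ℤ½ˣ) (hu : 2 * (u : ℤ½) ^ 2 - 5 * u + 2 = 0) (hf : lift u hu (Qmk2 f) = 0) :
      (p.map (Int.castRingHom ℚ)).IsRoot (toRat u) := by
    have hpu : lift u hu (Qmk2 (toLaurent p)) = 0 := by rw [hp, map_mul, map_mul, hf, zero_mul]
    rw [lift_mk, LaurentPolynomial.eval₂_toLaurent] at hpu
    have := congrArg toRat hpu
    rwa [map_zero, hom_eval₂, RingHom.ext_int (toRat.comp _) (Int.castRingHom ℚ), ← eval_map]
      at this
  obtain ⟨q, hq⟩ := deltaPoly_dvd_of_isRoot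
    (toRat_twoUnit ▸ hroot _ _ htwo) (toRat_twoUnit_inv ▸ hroot _ _ hhalf)
  have hp0 : Qmk2 (toLaurent p) = 0 := Ideal.Quotient.eq_zero_iff_mem.mpr <|
    Ideal.mem_span_singleton.mpr ⟨toLaurent q, by rw [hq, map_mul, toLaurent_deltaPoly]⟩
  rwa [hp, map_mul, ((LaurentPolynomial.isUnit_T n).map Qmk2).mul_left_eq_zero] at hp0

theorem eq_of_evalHalf_eq_of_evalTwo_eq {x y : Lam2} (hhalf : evalHalf x = evalHalf y)
    (htwo : evalTwo x = evalTwo y) : x = y :=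
  sub_eq_zero.mp <| eq_zero_of_evalHalf_eq_zero_of_evalTwo_eq_zero
    (by rw [map_sub, hhalf, sub_self]) (by rw [map_sub, htwo, sub_self])

theorem neg_one_ne_mk_T (j : ℤ) : (-1 : Lam2) ≠ Qmk2 (T j) := fun h => by
  have h2 := congrArg (toRat ∘ evalHalf) h
  simp only [Function.comp_apply, map_neg, map_one, evalHalf_mk_T, toRat_twoUnit_zpow] at h2
  linarith [zpow_pos (two_pos : (0 : ℚ) < 2) (-j)]

section Involution

variable {τ : Lam2 →+* Lam2}

theorem evalHalf_comp (hτ : τ (Qmk2 (T 1)) = Qmk2 (T (-1))) : evalHalf.comp τ = evalTwo :=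
  ringHom_ext (by simp [hτ, evalHalf_mk_T, evalTwo_mk_T])

theorem evalTwo_comp (hτ : τ (Qmk2 (T 1)) = Qmk2 (T (-1))) : evalTwo.comp τ = evalHalf :=
  ringHom_ext (by simp [hτ, evalHalf_mk_T, evalTwo_mk_T])

theorem mul_apply_eq_one_iff (hτ : τ (Qmk2 (T 1)) = Qmk2 (T (-1))) (x : Lam2) :
    x * τ x = 1 ↔ evalHalf x * evalTwo x = 1 := by
  have hhalf := RingHom.congr_fun (evalHalf_comp hτ) x
  have htwo := RingHom.congr_fun (evalTwo_comp hτ) x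
  simp only [RingHom.comp_apply] at hhalf htwo
  refine ⟨fun hx => by simpa [hhalf] using congrArg evalHalf hx, fun hx => ?_⟩
  exact eq_of_evalHalf_eq_of_evalTwo_eq (by simpa [hhalf] using hx)
    (by simpa [htwo, mul_comm] using hx)

theorem injOn_evalHalf (hτ : τ (Qmk2 (T 1)) = Qmk2 (T (-1))) :
    Set.InjOn evalHalf {x : Lam2 | x * τ x = 1} := by
  intro x hx y hy hxy
  rw [Set.mem_ofPred_eq, mul_apply_eq_one_iff hτ] at hx hy
  refine eq_of_evalHalf_eq_of_evalTwo_eq hxy (left_inv_eq_right_inv (a := evalHalf x) ?_ ?_)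
  · rwa [mul_comm]
  · rwa [hxy]

theorem exists_mul_apply_eq_one_and_evalHalf_eq (hτ : τ (Qmk2 (T 1)) = Qmk2 (T (-1)))
    (w : ℤ½ˣ) :
    ∃ j : ℤ, ∃ x ∈ ({Qmk2 (T j), -Qmk2 (T j)} : Set Lam2), x * τ x = 1 ∧ evalHalf x = w := by
  have hT (j : ℤ) : evalHalf (Qmk2 (T j)) * evalTwo (Qmk2 (T j)) = 1 := by
    rw [evalHalf_mk_T, evalTwo_mk_T, ← Units.val_mul, ← zpow_add, neg_add_cancel, zpow_zero,
      Units.val_one]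
  obtain ⟨j, rfl | rfl⟩ := Localization.Away.exists_eq_zpow_or_eq_neg_zpow Int.prime_two w
  · refine ⟨-j, _, .inl rfl, (mul_apply_eq_one_iff hτ _).mpr (hT _), ?_⟩
    rw [evalHalf_mk_T, neg_neg]
    rfl
  · refine ⟨-j, _, .inr rfl, (mul_apply_eq_one_iff hτ _).mpr ?_, ?_⟩
    · rw [map_neg, map_neg]
      exact (neg_mul_neg _ _).trans (hT _)
    · rw [map_neg, evalHalf_mk_T, neg_neg]
      rfl

end Involution

end Lam2

/-- for `n = 2` the group `U(Λ₂)/{tʲ}` is `ℤ/2`. Concretely: every unit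
`x` of `ℤ[1/2]` satisfies `x - x⁻¹ ∈ 3·ℤ[1/2]`; the homomorphism `Λ₂ → ℤ[1/2]`,
`t ↦ 1/2`, maps unitary units bijectively onto `ℤ[1/2]ˣ`; and every unitary unit of
`Λ₂` is `± tʲ` with `-1` not a power of `t`. -/
theorem stmt18 (τ : Lam2 →+* Lam2)
    (hτ : τ (Qmk2 (LaurentPolynomial.T 1)) = Qmk2 (LaurentPolynomial.T (-1))) :
    (∀ x : Localization.Away (2 : ℤ), IsUnit x →
      ∃ c : Localization.Away (2 : ℤ), x - Ring.inverse x = 3 * c) ∧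
    (∃ ψ : Lam2 →+* Localization.Away (2 : ℤ),
      ψ (Qmk2 (LaurentPolynomial.T 1)) =
        Ring.inverse (algebraMap ℤ (Localization.Away (2 : ℤ)) 2) ∧
      Set.BijOn ψ {x : Lam2 | x * τ x = 1} {y : Localization.Away (2 : ℤ) | IsUnit y}) ∧
    (∀ x : Lam2, x * τ x = 1 → ∃ j : ℤ,
      x = Qmk2 (LaurentPolynomial.T j) ∨ x = -Qmk2 (LaurentPolynomial.T j)) ∧
    (∀ j : ℤ, (-1 : Lam2) ≠ Qmk2 (LaurentPolynomial.T j)) := by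
  have hunit (x : Lam2) (hx : x * τ x = 1) : IsUnit (Lam2.evalHalf x) :=
    .of_mul_eq_one _ ((Lam2.mul_apply_eq_one_iff hτ x).mp hx)
  refine ⟨?_, ⟨Lam2.evalHalf, ?_, ⟨hunit, Lam2.injOn_evalHalf hτ, ?_⟩⟩, ?_, Lam2.neg_one_ne_mk_T⟩
  · rintro _ ⟨w, rfl⟩
    rw [Ring.inverse_unit]
    exact three_dvd_sub_inv w
  · rw [Lam2.evalHalf_mk_T, zpow_neg_one, ← Ring.inverse_unit]
    rfl
  · rintro _ ⟨w, rfl⟩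
    obtain ⟨j, x, -, hx, hxw⟩ := Lam2.exists_mul_apply_eq_one_and_evalHalf_eq hτ w
    exact ⟨x, hx, hxw⟩
  · intro x hx
    obtain ⟨w, hw⟩ := hunit x hx
    obtain ⟨j, y, hy, hyτ, hyw⟩ := Lam2.exists_mul_apply_eq_one_and_evalHalf_eq hτ w
    exact ⟨j, (Lam2.injOn_evalHalf hτ hx hyτ (hw ▸ hyw.symm)) ▸ hy⟩
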